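/- arXiv:1910.13905 — 5 statements merged into one kernel-verified Lean document; each statement's English description precedes it below -/
import Mathlib

section
/- For the matrix I(θ) := 1_H e_θ^T − I_H (where 1_H is the H×1 all-ones vector and e_θ the θ-th standard basis vector of R^H), the Moore–Penrose pseudoinverse satisfies I_H − I(θ)† I(θ) = (1/H) 1_H 1_H^T. -/
open Matrix

/-- For `I(θ) = 1_H e_θᵀ - I_H`, the Moore–Penrose pseudoinverse
(characterized by the four Penrose conditions) satisfies
`I_H - I(θ)† I(θ) = (1/H) 1_H 1_Hᵀ`. -/
theorem stmt_2 {H : ℕ} (hH : 1 ≤ H) (θ : Fin H)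
    (M : Matrix (Fin H) (Fin H) ℝ)
    (hM : M = Matrix.of fun i j => (if j = θ then (1 : ℝ) else 0) - (if i = j then 1 else 0))
    (P : Matrix (Fin H) (Fin H) ℝ)
    (h1 : M * P * M = M) (h2 : P * M * P = P)
    (h3 : (M * P)ᵀ = M * P) (h4 : (P * M)ᵀ = P * M) :
    (1 : Matrix (Fin H) (Fin H) ℝ) - P * M = (H : ℝ)⁻¹ • Matrix.of (fun _ _ => (1 : ℝ)) := by
  set N : Matrix (Fin H) (Fin H) ℝ := 1 - P * M with hN
  have hMN : M * N = 0 := by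
    rw [hN, Matrix.mul_sub, Matrix.mul_one, ← Matrix.mul_assoc, h1, sub_self]
  have hsym : Nᵀ = N := by
    rw [hN, Matrix.transpose_sub, Matrix.transpose_one, h4]
  have hrow : ∀ i j, N i j = N θ j := by
    intro i j
    have h0 : (M * N) i j = 0 := by rw [hMN]; rfl
    rw [Matrix.mul_apply] at h0
    simp only [hM, Matrix.of_apply, sub_mul, Finset.sum_sub_distrib, ite_mul, one_mul,
      zero_mul, Finset.sum_ite_eq', Finset.sum_ite_eq, Finset.mem_univ, if_true] at h0
    linarith
  have hconst : ∀ i j, N i j = N θ θ := by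
    intro i j
    rw [hrow i j]
    have h1' : N θ j = Nᵀ j θ := rfl
    rw [h1', hsym, hrow j θ]
  have hMv : M.mulVec (fun _ => (1:ℝ)) = 0 := by
    funext i
    simp [Matrix.mulVec, dotProduct, hM, Finset.sum_sub_distrib]
  have hNv : N.mulVec (fun _ => (1:ℝ)) = fun _ => 1 := by
    rw [hN, Matrix.sub_mulVec, Matrix.one_mulVec, ← Matrix.mulVec_mulVec, hMv,
      Matrix.mulVec_zero]
    funext i; simp
  have hc : (H : ℝ) * N θ θ = 1 := by
    have h5 := congrFun hNv θ
    rw [Matrix.mulVec, dotProduct] at h5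
    calc (H : ℝ) * N θ θ = ∑ j : Fin H, N θ j * 1 := by
          simp only [mul_one]
          rw [Finset.sum_congr rfl (fun j _ => hconst θ j)]
          simp [mul_comm]
      _ = 1 := h5
  have hHne : (H : ℝ) ≠ 0 := by positivity
  ext i j
  show N i j = _
  rw [hconst i j]
  have : N θ θ = (H:ℝ)⁻¹ := by field_simp at hc ⊢; linarith
  simp [this]
end

section
/- Let m_1,…,m_H be pairwise distinct real numbers with H ≥ 3, and let D be the H×S matrix (S ≤ H) with entries D_{θs} = (1/2)(m_θ − m_s)^2. Then rank(D) = 2 if S = 2 and rank(D) = 3 if S ≥ 3. -/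
open Matrix

/-- Rank of any (rectangular) submatrix is at most the rank of the matrix. -/
lemma rank_submatrix_le' {m n k l : Type*} [Fintype m] [Fintype n] [Fintype k] [Fintype l]
    [DecidableEq m] [DecidableEq n]
    (A : Matrix m n ℝ) (f : k → m) (g : l → n) :
    (A.submatrix f g).rank ≤ A.rank := by
  have h1 : ((1 : Matrix m m ℝ).submatrix f (Equiv.refl m)) * A = A.submatrix f id := by
    rw [Matrix.one_submatrix_mul]
    rfl
  have h2 : (A.submatrix f id) * ((1 : Matrix n n ℝ).submatrix (Equiv.refl n) g)
      = A.submatrix f g := by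
    rw [Matrix.mul_submatrix_one]
    simp [Matrix.submatrix_submatrix]
  calc (A.submatrix f g).rank
      = ((A.submatrix f id) * ((1 : Matrix n n ℝ).submatrix (Equiv.refl n) g)).rank := by
        rw [h2]
    _ ≤ (A.submatrix f id).rank := Matrix.rank_mul_le_left _ _
    _ = (((1 : Matrix m m ℝ).submatrix f (Equiv.refl m)) * A).rank := by rw [h1]
    _ ≤ A.rank := Matrix.rank_mul_le_right _ _

/-- For pairwise distinct reals `m_1,…,m_H` with `H ≥ 3` and `S ≤ H`,
the `H × S` matrix `D_{θs} = (1/2)(m_θ - m_s)^2` has rank 2 if `S = 2`,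
and rank 3 if `S ≥ 3`. -/
theorem stmt_8 {H S : ℕ} (hH : 3 ≤ H) (hSH : S ≤ H)
    (m : Fin H → ℝ) (hm : Function.Injective m)
    (D : Matrix (Fin H) (Fin S) ℝ)
    (hD : D = Matrix.of fun θ s => (1 / 2 : ℝ) * (m θ - m (Fin.castLE hSH s)) ^ 2) :
    (S = 2 → D.rank = 2) ∧ (3 ≤ S → D.rank = 3) := by
  constructor
  · -- S = 2
    rintro rfl
    -- upper bound
    have hub : D.rank ≤ 2 := by
      simpa using Matrix.rank_le_card_width D
    -- lower bound via 2×2 submatrix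
    set f : Fin 2 → Fin H := fun i => Fin.castLE hSH i with hf
    set M : Matrix (Fin 2) (Fin 2) ℝ := D.submatrix f id with hM
    have hne : m (f 0) ≠ m (f 1) := fun h => by
      have := hm h
      simp [hf, Fin.ext_iff] at this
    have hdet : M.det ≠ 0 := by
      have hMdet : M.det = -(((1:ℝ)/2) * (m (f 0) - m (f 1)) ^ 2) ^ 2 := by
        rw [Matrix.det_fin_two]
        simp [hM, hD, hf]
        ring
      rw [hMdet, neg_ne_zero]
      have : m (f 0) - m (f 1) ≠ 0 := sub_ne_zero.mpr hne
      positivity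
    have hMrank : M.rank = 2 := by
      have := Matrix.rank_of_isUnit M ((Matrix.isUnit_iff_isUnit_det _).2 (isUnit_iff_ne_zero.2 hdet))
      simpa using this
    have hlb : M.rank ≤ D.rank := rank_submatrix_le' D f id
    rw [hMrank] at hlb
    omega
  · -- 3 ≤ S
    intro hS3
    -- upper bound: factorization D = A * B with inner dimension 3
    have hub : D.rank ≤ 3 := by
      set A : Matrix (Fin H) (Fin 3) ℝ :=
        Matrix.of fun θ j => ![(1/2 : ℝ) * m θ ^ 2, m θ, 1] j with hA
      set B : Matrix (Fin 3) (Fin S) ℝ :=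
        Matrix.of fun j s => ![(1 : ℝ), -(m (Fin.castLE hSH s)), (1/2 : ℝ) * m (Fin.castLE hSH s) ^ 2] j with hB
      have hfac : D = A * B := by
        ext θ s
        simp [hD, hA, hB, Matrix.mul_apply, Fin.sum_univ_three]
        ring
      calc D.rank = (A * B).rank := by rw [hfac]
        _ ≤ A.rank := Matrix.rank_mul_le_left _ _
        _ ≤ 3 := by simpa using Matrix.rank_le_card_width A
    -- lower bound via 3×3 submatrix
    set g : Fin 3 → Fin S := fun i => Fin.castLE hS3 i with hg
    set f : Fin 3 → Fin H := fun i => Fin.castLE hSH (g i) with hf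
    set M : Matrix (Fin 3) (Fin 3) ℝ := D.submatrix f g with hM
    have hne : ∀ i j : Fin 3, i ≠ j → m (f i) - m (f j) ≠ 0 := by
      intro i j hij
      refine sub_ne_zero.mpr (fun h => hij ?_)
      have := hm h
      simpa [hf, hg, Fin.ext_iff] using this
    have hdet : M.det ≠ 0 := by
      have hMdet : M.det = (1/4 : ℝ) *
          ((m (f 0) - m (f 1)) * (m (f 0) - m (f 2)) * (m (f 1) - m (f 2))) ^ 2 := by
        rw [Matrix.det_fin_three]
        simp [hM, hD]
        ring
      rw [hMdet]
      have h01 := hne 0 1 (by decide)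
      have h02 := hne 0 2 (by decide)
      have h12 := hne 1 2 (by decide)
      positivity
    have hMrank : M.rank = 3 := by
      have := Matrix.rank_of_isUnit M ((Matrix.isUnit_iff_isUnit_det _).2 (isUnit_iff_ne_zero.2 hdet))
      simpa using this
    have hlb : M.rank ≤ D.rank := rank_submatrix_le' D f g
    rw [hMrank] at hlb
    omega
end

section
/- Let p_1, p_2, p_3 be pairwise distinct real numbers, let E_3 be the 3×3 matrix with entries e_{ij} = (1/2)(p_i − p_j)^2, and let v_3 be the unique solution of v_3^T E_3 = 1_3^T. Then the entries of v_3 sum to zero: v_3^T 1_3 = 0. -/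
open Matrix

/-- For pairwise distinct `p_1, p_2, p_3` and `E_3` with entries
`(1/2)(p_i - p_j)^2`, the unique solution `v` of `vᵀ E_3 = 1ᵀ` sums to zero. -/
theorem stmt_9 (p : Fin 3 → ℝ) (hp : Function.Injective p)
    (E3 : Matrix (Fin 3) (Fin 3) ℝ)
    (hE3 : E3 = Matrix.of fun i j => (1 / 2 : ℝ) * (p i - p j) ^ 2)
    (v : Fin 3 → ℝ)
    (hv : Matrix.vecMul v E3 = fun _ => 1) :
    ∑ i, v i = 0 := by
  subst hE3
  have h0 := congrFun hv 0
  have h1 := congrFun hv 1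
  have h2 := congrFun hv 2
  simp [Matrix.vecMul, dotProduct, Fin.sum_univ_succ] at h0 h1 h2
  have d01 : p 0 ≠ p 1 := fun h => by simpa using hp h
  have d02 : p 0 ≠ p 2 := fun h => by simpa using hp h
  have d12 : p 1 ≠ p 2 := fun h => by simpa using hp h
  have s01 : (p 0 - p 1) * ((∑ i, v i) * (p 0 + p 1) - 2 * (∑ i, v i * p i)) = 0 := by
    simp only [Fin.sum_univ_three]; linear_combination (2:ℝ) * h0 - 2 * h1
  have s02 : (p 0 - p 2) * ((∑ i, v i) * (p 0 + p 2) - 2 * (∑ i, v i * p i)) = 0 := by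
    simp only [Fin.sum_univ_three]; linear_combination (2:ℝ) * h0 - 2 * h2
  have e01 := (mul_eq_zero.1 s01).resolve_left (sub_ne_zero.2 d01)
  have e02 := (mul_eq_zero.1 s02).resolve_left (sub_ne_zero.2 d02)
  have : (∑ i, v i) * (p 1 - p 2) = 0 := by linarith
  have := (mul_eq_zero.1 this).resolve_right (sub_ne_zero.2 d12)
  exact this
end

section
/- Let M be an L×L symmetric matrix of the form M_{ij} = (1/2)(p_i − p_j)^2 for real numbers p_1,…,p_L (i.e., proportional to a one-dimensional Euclidean distance matrix) with at least two distinct points. Then the all-ones vector 1_L lies in the column space of M, i.e., there exists u ∈ R^L with M u = 1_L. -/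
open Matrix

lemma aux_three (x a b c : ℝ) (hab : a - b ≠ 0) (hac : a - c ≠ 0) (hbc : b - c ≠ 0) :
    (1 / 2) * (x - a) ^ 2 * (2 / ((a - b) * (a - c)))
      + (1 / 2) * (x - b) ^ 2 * (2 / ((b - a) * (b - c)))
      + (1 / 2) * (x - c) ^ 2 * (2 / ((c - a) * (c - b))) = 1 := by
  have hba : b - a ≠ 0 := by intro e; exact hab (by linarith [sub_eq_zero.mp e])
  have hca : c - a ≠ 0 := by intro e; exact hac (by linarith [sub_eq_zero.mp e])
  have hcb : c - b ≠ 0 := by intro e; exact hbc (by linarith [sub_eq_zero.mp e])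
  field_simp
  ring

lemma aux_two (x a b : ℝ) (hab : a - b ≠ 0) (hx : x = a ∨ x = b) :
    (1 / 2) * (x - a) ^ 2 * (2 / (a - b) ^ 2)
      + (1 / 2) * (x - b) ^ 2 * (2 / (a - b) ^ 2) = 1 := by
  have h2 : (a - b) ^ 2 ≠ 0 := pow_ne_zero _ hab
  rcases hx with rfl | rfl <;> field_simp <;> ring

/-- For points `p_1,…,p_L ∈ ℝ`, not all equal, the matrix
`M_{ij} = (1/2)(p_i - p_j)^2` has the all-ones vector in its column space. -/
theorem stmt_14 {L : ℕ} (p : Fin L → ℝ) (hp : ∃ i j : Fin L, p i ≠ p j)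
    (M : Matrix (Fin L) (Fin L) ℝ)
    (hM : M = Matrix.of fun i j => (1 / 2 : ℝ) * (p i - p j) ^ 2) :
    ∃ u : Fin L → ℝ, M.mulVec u = fun _ => 1 := by
  obtain ⟨i0, j0, hab⟩ := hp
  by_cases h : ∃ k, p k ≠ p i0 ∧ p k ≠ p j0
  · obtain ⟨k0, hca, hcb⟩ := h
    refine ⟨fun j => (2 / ((p i0 - p j0) * (p i0 - p k0))) * (if j = i0 then 1 else 0)
      + (2 / ((p j0 - p i0) * (p j0 - p k0))) * (if j = j0 then 1 else 0)
      + (2 / ((p k0 - p i0) * (p k0 - p j0))) * (if j = k0 then 1 else 0), ?_⟩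
    funext i
    have hab' : p i0 - p j0 ≠ 0 := sub_ne_zero.mpr hab
    have hac' : p i0 - p k0 ≠ 0 := sub_ne_zero.mpr (fun e => hca e.symm)
    have hbc' : p j0 - p k0 ≠ 0 := sub_ne_zero.mpr (fun e => hcb e.symm)
    simp only [Matrix.mulVec, dotProduct, hM, Matrix.of_apply, mul_add, mul_ite, mul_one,
      mul_zero, Finset.sum_add_distrib, Finset.sum_ite_eq', Finset.mem_univ, if_true]
    exact aux_three (p i) (p i0) (p j0) (p k0) hab' hac' hbc'
  · push_neg at h
    refine ⟨fun j => (2 / (p i0 - p j0) ^ 2) * (if j = i0 then 1 else 0)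
      + (2 / (p i0 - p j0) ^ 2) * (if j = j0 then 1 else 0), ?_⟩
    funext i
    have hab' : p i0 - p j0 ≠ 0 := sub_ne_zero.mpr hab
    simp only [Matrix.mulVec, dotProduct, hM, Matrix.of_apply, mul_add, mul_ite, mul_one,
      mul_zero, Finset.sum_add_distrib, Finset.sum_ite_eq', Finset.mem_univ, if_true]
    refine aux_two (p i) (p i0) (p j0) hab' ?_
    by_cases hx : p i = p i0
    · exact Or.inl hx
    · exact Or.inr (h i hx)
end

section
/- Let D and I be H×S and H×H real matrices respectively. There exist matrices X (S×H) and Y (H×H) solving D X + Y I = I_H if and only if (I_H − D D†)(I_H − I† I) = 0, where † denotes the Moore–Penrose pseudoinverse. Consequently, if I = 1_H e_θ^T − I_H, this condition is equivalent to D D† 1_H = 1_H. -/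
open Matrix

/-- The equation `D X + Y I = I_H` is solvable iff
`(I_H - D D†)(I_H - I† I) = 0`; and when `I = 1_H e_θᵀ - I_H` this condition is
equivalent to `D D† 1_H = 1_H`. Pseudoinverses are characterized by the four
Penrose conditions. -/
theorem stmt_16 {H S : ℕ} (θ : Fin H)
    (D : Matrix (Fin H) (Fin S) ℝ) (I' : Matrix (Fin H) (Fin H) ℝ)
    (Dp : Matrix (Fin S) (Fin H) ℝ)
    (hD1 : D * Dp * D = D) (hD2 : Dp * D * Dp = Dp)
    (hD3 : (D * Dp)ᵀ = D * Dp) (hD4 : (Dp * D)ᵀ = Dp * D)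
    (Ip : Matrix (Fin H) (Fin H) ℝ)
    (hI1 : I' * Ip * I' = I') (hI2 : Ip * I' * Ip = Ip)
    (hI3 : (I' * Ip)ᵀ = I' * Ip) (hI4 : (Ip * I')ᵀ = Ip * I') :
    ((∃ (X : Matrix (Fin S) (Fin H) ℝ) (Y : Matrix (Fin H) (Fin H) ℝ),
        D * X + Y * I' = 1) ↔
      ((1 : Matrix (Fin H) (Fin H) ℝ) - D * Dp) *
        ((1 : Matrix (Fin H) (Fin H) ℝ) - Ip * I') = 0) ∧
    (I' = Matrix.of (fun i j => (if j = θ then (1 : ℝ) else 0) - (if i = j then 1 else 0)) →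
      (((1 : Matrix (Fin H) (Fin H) ℝ) - D * Dp) *
          ((1 : Matrix (Fin H) (Fin H) ℝ) - Ip * I') = 0 ↔
        (D * Dp).mulVec (fun _ => 1) = fun _ => 1)) := by
  have h1 : (1 - D * Dp) * D = 0 := by
    rw [Matrix.sub_mul, Matrix.one_mul, hD1, sub_self]
  have h2 : I' * (1 - Ip * I') = 0 := by
    rw [Matrix.mul_sub, Matrix.mul_one, ← Matrix.mul_assoc, hI1, sub_self]
  have hHne : (H : ℝ) ≠ 0 := Nat.cast_ne_zero.2 θ.pos.ne'
  constructor
  · constructor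
    · rintro ⟨X, Y, heq⟩
      have step : (1 - D * Dp) * (1 - Ip * I')
          = (1 - D * Dp) * (D * X + Y * I') * (1 - Ip * I') := by
        rw [heq, mul_one]
      have e1 : (1 - D * Dp) * (D * X) = 0 := by
        rw [← Matrix.mul_assoc, h1, Matrix.zero_mul]
      have e2 : Y * I' * (1 - Ip * I') = 0 := by
        rw [Matrix.mul_assoc, h2, Matrix.mul_zero]
      rw [step, Matrix.mul_add, Matrix.add_mul, e1, Matrix.zero_mul,
        Matrix.mul_assoc, e2, Matrix.mul_zero, add_zero]
    · intro h
      refine ⟨Dp, (1 - D * Dp) * Ip, ?_⟩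
      have h' : (1 - D * Dp) * (Ip * I') = 1 - D * Dp := by
        rw [Matrix.mul_sub, Matrix.mul_one, sub_eq_zero] at h
        exact h.symm
      calc D * Dp + (1 - D * Dp) * Ip * I'
          = D * Dp + (1 - D * Dp) * (Ip * I') := by rw [Matrix.mul_assoc]
        _ = D * Dp + (1 - D * Dp) := by rw [h']
        _ = 1 := by noncomm_ring
  · intro hI
    have hIe : ∀ i k, I' i k
        = (if k = θ then (1 : ℝ) else 0) - (if i = k then 1 else 0) := by
      intro i k; rw [hI]; rfl
    set Q : Matrix (Fin H) (Fin H) ℝ := 1 - Ip * I' with hQdef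
    -- every column of Q is constant
    have hcol : ∀ i j, Q i j = Q θ j := by
      intro i j
      have h0 : (I' * Q) i j = (0 : Matrix (Fin H) (Fin H) ℝ) i j := by rw [h2]
      rw [Matrix.mul_apply] at h0
      simp only [hIe, sub_mul, ite_mul, one_mul, zero_mul,
        Finset.sum_sub_distrib, Finset.sum_ite_eq, Finset.sum_ite_eq',
        Finset.mem_univ, if_true, Matrix.zero_apply] at h0
      linarith
    -- Q is symmetric
    have hsymQ : Qᵀ = Q := by
      rw [hQdef, Matrix.transpose_sub, Matrix.transpose_one, hI4]
    have hsym : ∀ i j, Q i j = Q j i := by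
      intro i j
      have := congrFun (congrFun hsymQ j) i
      rwa [Matrix.transpose_apply] at this
    have hconst : ∀ i j, Q i j = Q θ θ := by
      intro i j
      rw [hcol i j, hsym θ j, hcol j θ]
    -- row sums of I' are zero
    have hrow : ∀ k, ∑ j, I' k j = 0 := by
      intro k
      simp [hIe, Finset.sum_sub_distrib]
    -- row sums of Q are 1
    have hsum : ∀ i, ∑ j, Q i j = 1 := by
      intro i
      have : ∑ j, Q i j
          = ∑ j, ((1 : Matrix (Fin H) (Fin H) ℝ) i j - ∑ k, Ip i k * I' k j) := by
        simp [hQdef, Matrix.mul_apply]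
      rw [this, Finset.sum_sub_distrib, Finset.sum_comm]
      simp [← Finset.mul_sum, hrow, Matrix.one_apply]
    -- the value of Q
    have hval : ∀ i j, Q i j = 1 / (H : ℝ) := by
      intro i j
      have hs := hsum θ
      have : ∑ j : Fin H, Q θ j = (H : ℝ) * Q θ θ := by
        rw [Finset.sum_congr rfl (fun j _ => hconst θ j)]
        simp [Finset.card_univ, mul_comm]
      rw [this] at hs
      rw [hconst i j]
      field_simp
      linarith
    constructor
    · intro h
      funext i
      have h0 := Matrix.ext_iff.2 h i θ
      rw [Matrix.mul_apply, Matrix.zero_apply] at h0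
      simp only [hval] at h0
      rw [← Finset.sum_mul] at h0
      have hs0 : ∑ k, (1 - D * Dp : Matrix (Fin H) (Fin H) ℝ) i k = 0 := by
        rcases mul_eq_zero.mp h0 with h' | h'
        · exact h'
        · exact absurd h' (by simp [hHne])
      simp only [Matrix.sub_apply, Matrix.one_apply, Finset.sum_sub_distrib,
        Finset.sum_ite_eq, Finset.mem_univ, if_true] at hs0
      show ∑ k, (D * Dp) i k * (1 : ℝ) = 1
      simp only [mul_one]
      linarith
    · intro h
      rw [← Matrix.ext_iff]
      intro i j
      rw [Matrix.mul_apply, Matrix.zero_apply]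
      simp only [hval]
      rw [← Finset.sum_mul]
      have h0 : ∑ k, (D * Dp) i k * (1 : ℝ) = 1 := congrFun h i
      simp only [mul_one] at h0
      have : ∑ k, (1 - D * Dp : Matrix (Fin H) (Fin H) ℝ) i k = 0 := by
        simp only [Matrix.sub_apply, Matrix.one_apply, Finset.sum_sub_distrib,
          Finset.sum_ite_eq, Finset.mem_univ, if_true]
        linarith
      rw [this, zero_mul]
end
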